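/- Let I and J be admissible multi-indices with J nonempty. Then the product P^I · P^J in B lies in the F_2-linear span of the set of elements P^K, where K ranges over nonempty admissible multi-indices with e(K) ≥ e(J). -/

import Mathlib

/-! Statements about the algebra `B` of generalized Steenrod operations at `p = 2`. -/

open scoped BigOperators

/-- The generator `P^s` of the free algebra, for `s : ℤ`. -/
noncomputable def Pfree (s : ℤ) : FreeAlgebra (ZMod 2) ℤ := FreeAlgebra.ι (ZMod 2) s

/-- The mod 2 binomial coefficient `binom (s-i-1) (r-2i)`, which is zero unless
`0 ≤ r - 2i ≤ s - i - 1`. -/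
def ademCoef (r s i : ℤ) : ZMod 2 :=
  if 0 ≤ r - 2*i ∧ r - 2*i ≤ s - i - 1 then ((s - i - 1).toNat.choose (r - 2*i).toNat : ZMod 2)
  else 0

/-- The right hand side `Σ_{i ∈ ℤ} binom(s−i−1, r−2i) P^{r+s−i} P^i` of the Adem relation;
all terms with `i` outside `Finset.Icc (r - s + 1) (r / 2)` have vanishing coefficient. -/
noncomputable def ademRHS (r s : ℤ) : FreeAlgebra (ZMod 2) ℤ :=
  ∑ i ∈ Finset.Icc (r - s + 1) (r / 2), ademCoef r s i • (Pfree (r + s - i) * Pfree i)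

/-- The Adem relations: for `r < 2s`, `P^r P^s` is related to its admissible expansion. -/
inductive AdemRel : FreeAlgebra (ZMod 2) ℤ → FreeAlgebra (ZMod 2) ℤ → Prop
  | rel (r s : ℤ) (h : r < 2*s) : AdemRel (Pfree r * Pfree s) (ademRHS r s)

/-- The algebra `B` of generalized Steenrod operations at the prime 2: the quotient of the
free noncommutative `F₂`-algebra on symbols `P^s`, `s ∈ ℤ`, by the two sided ideal generated
by the Adem relations. -/
noncomputable abbrev B : Type := RingQuot AdemRel

/-- The class of a generator `P^s` in `B`. -/
noncomputable def P (s : ℤ) : B := RingQuot.mkAlgHom (ZMod 2) AdemRel (Pfree s)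

/-- The monomial `P^I = P^{i₁} ⋯ P^{iₙ}` in `B` associated to a multi-index `I`. -/
noncomputable def PI (I : List ℤ) : B := (I.map P).prod

/-- A multi-index `I = (i₁, …, iₙ)` is admissible if `iⱼ ≥ 2 i_{j+1}` for all `j`. -/
def Admissible (I : List ℤ) : Prop := I.Chain' (fun a b => 2*b ≤ a)

/-- The excess `e(I) = i₁ − i₂ − ⋯ − iₙ` of a (nonempty) multi-index. -/
def excess : List ℤ → ℤ
  | [] => 0
  | a :: l => a - l.sum

/-!
A monomial `P^I` that is not admissible contains a pair `P^r P^s` with `r < 2s`, and the Adem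
relation rewrites it as a sum of monomials with the pair replaced by `(r + s - i, i)`,
`r - s < i ≤ r / 2`. Such a rewrite keeps the length and the degree, never lowers the excess,
and strictly raises the moment `∑ⱼ (n - j + 1) iⱼ`. The moment stays bounded because every
entry of the rewritten list stays below the corresponding entry of any admissible list that
dominated the original one. Hence every nonempty monomial of excess `≥ c` straightens to a sum of
admissible monomials of excess `≥ c`. For `P^a P^K` with `K = (k, …)` admissible, either
`a ≥ 2k` or one Adem rewrite of the front pair gives monomials of excess `≥ e(K)` (as `2i ≤ a`);
multiplying `P^J` by the letters of `I` one at a time proves the theorem.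
-/

section

open List

def admissibleMonomials (c : ℤ) : Set B :=
  {x : B | ∃ K : List ℤ, K ≠ [] ∧ Admissible K ∧ c ≤ excess K ∧ x = PI K}

theorem PI_nil : PI [] = 1 := rfl

theorem PI_cons (a : ℤ) (l : List ℤ) : PI (a :: l) = P a * PI l := by
  simp [PI]

theorem PI_append (l₁ l₂ : List ℤ) : PI (l₁ ++ l₂) = PI l₁ * PI l₂ := by
  simp [PI]

theorem P_mul_P (r s : ℤ) (h : r < 2 * s) :
    P r * P s = ∑ i ∈ Finset.Icc (r - s + 1) (r / 2), ademCoef r s i • (P (r + s - i) * P i) := by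
  simpa [P, ademRHS, map_sum, map_mul] using RingQuot.mkAlgHom_rel (ZMod 2) (AdemRel.rel r s h)

theorem bounds_of_ademCoef_ne_zero {r s i : ℤ} (h : ademCoef r s i ≠ 0) :
    0 ≤ r - 2 * i ∧ r - 2 * i ≤ s - i - 1 := by
  by_contra hcon
  exact h (if_neg hcon)

theorem PI_append_cons_cons_mem_of_adem (T : Submodule (ZMod 2) B) (pre suf : List ℤ) {r s : ℤ}
    (h : r < 2 * s) (H : ∀ i, ademCoef r s i ≠ 0 → PI (pre ++ (r + s - i) :: i :: suf) ∈ T) :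
    PI (pre ++ r :: s :: suf) ∈ T := by
  have hexp : PI (pre ++ r :: s :: suf) = ∑ i ∈ Finset.Icc (r - s + 1) (r / 2),
      ademCoef r s i • PI (pre ++ (r + s - i) :: i :: suf) := by
    calc PI (pre ++ r :: s :: suf) = PI pre * ((P r * P s) * PI suf) := by
          simp only [PI_append, PI_cons, mul_assoc]
      _ = _ := by
          rw [P_mul_P r s h, Finset.sum_mul, Finset.mul_sum]
          refine Finset.sum_congr rfl fun i _ => ?_
          simp only [PI_append, PI_cons, smul_mul_assoc, mul_smul_comm, mul_assoc]
  rw [hexp]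
  refine T.sum_mem fun i _ => ?_
  by_cases hc : ademCoef r s i = 0
  · simp [hc]
  · exact T.smul_mem _ (H i hc)

theorem exists_eq_append_cons_cons_of_not_admissible :
    ∀ {I : List ℤ}, ¬ Admissible I → ∃ pre r s suf, I = pre ++ r :: s :: suf ∧ r < 2 * s
  | [], h => absurd isChain_nil h
  | [a], h => absurd (isChain_singleton a) h
  | a :: b :: l, h => by
    by_cases hab : 2 * b ≤ a
    · have hbl : ¬ Admissible (b :: l) := fun hbl => h (isChain_cons_cons.mpr ⟨hab, hbl⟩)
      obtain ⟨pre, r, s, suf, heq, hrs⟩ := exists_eq_append_cons_cons_of_not_admissible hbl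
      exact ⟨a :: pre, r, s, suf, by rw [heq, cons_append], hrs⟩
    · exact ⟨[], a, b, l, rfl, by omega⟩

theorem excess_le_excess_append_cons_cons (pre suf : List ℤ) {r s i : ℤ} (hi : i ≤ s) :
    excess (pre ++ r :: s :: suf) ≤ excess (pre ++ (r + s - i) :: i :: suf) := by
  cases pre with
  | nil => simp only [nil_append, excess, sum_cons]; linarith
  | cons a t => simp only [cons_append, excess, sum_append, sum_cons]; linarith

def moment : List ℤ → ℤ
  | [] => 0
  | a :: l => (l.length + 1) * a + moment l

theorem moment_lt_moment_append_cons_cons (pre suf : List ℤ) {r s i : ℤ} (hi : i < s) :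
    moment (pre ++ r :: s :: suf) < moment (pre ++ (r + s - i) :: i :: suf) := by
  induction pre with
  | nil => simp only [nil_append, moment, length_cons]; push_cast; nlinarith
  | cons a t ih => simp only [cons_append, moment, length_append, length_cons]; linarith

theorem moment_le_moment_of_forall₂ {l b : List ℤ} (h : Forall₂ (· ≤ ·) l b) :
    moment l ≤ moment b := by
  induction h with
  | nil => rfl
  | @cons a a' l b hab hlb ih =>
    simp only [moment, hlb.length_eq]
    have : (0 : ℤ) ≤ b.length + 1 := by positivity
    nlinarith

theorem exists_admissible_forall₂_le : ∀ I : List ℤ, ∃ b, Admissible b ∧ Forall₂ (· ≤ ·) I b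
  | [] => ⟨[], isChain_nil, Forall₂.nil⟩
  | a :: l => by
    obtain ⟨b, hb, hlb⟩ := exists_admissible_forall₂_le l
    refine ⟨max a (2 * b.headD 0) :: b, isChain_cons.mpr ⟨?_, hb⟩,
      Forall₂.cons (le_max_left _ _) hlb⟩
    cases b <;> simp

theorem forall₂_le_append_cons_cons {b : List ℤ} (hb : Admissible b) (pre suf : List ℤ)
    {r s x y : ℤ} (hx : x ≤ 2 * s) (hy : y ≤ s) (h : Forall₂ (· ≤ ·) (pre ++ r :: s :: suf) b) :
    Forall₂ (· ≤ ·) (pre ++ x :: y :: suf) b := by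
  induction pre generalizing b with
  | nil =>
    rcases h with _ | ⟨hr, _ | ⟨hs, hsuf⟩⟩
    have hb₁₂ := (isChain_cons_cons.mp hb).1
    exact .cons (by linarith) (.cons (by linarith) hsuf)
  | cons a t ih =>
    rcases h with _ | ⟨ha, ht⟩
    exact .cons ha (ih hb.tail ht)

theorem PI_mem_span_admissibleMonomials_of_forall₂_le {c : ℤ} {b : List ℤ} (hb : Admissible b)
    {I : List ℤ} (hIb : Forall₂ (· ≤ ·) I b) (hne : I ≠ []) (hc : c ≤ excess I) :
    PI I ∈ Submodule.span (ZMod 2) (admissibleMonomials c) := by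
  induction hn : (moment b - moment I).toNat using Nat.strong_induction_on generalizing I with
  | _ n ih =>
  by_cases hadm : Admissible I
  · exact Submodule.subset_span ⟨I, hne, hadm, hc, rfl⟩
  obtain ⟨pre, r, s, suf, rfl, hrs⟩ := exists_eq_append_cons_cons_of_not_admissible hadm
  refine PI_append_cons_cons_mem_of_adem _ pre suf hrs fun i hi => ?_
  obtain ⟨hi₁, hi₂⟩ := bounds_of_ademCoef_ne_zero hi
  have hIb' := forall₂_le_append_cons_cons hb pre suf (x := r + s - i) (y := i)
    (by omega) (by omega) hIb
  have hmoment := moment_lt_moment_append_cons_cons pre suf (r := r) (by omega : i < s)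
  have hbound := moment_le_moment_of_forall₂ hIb'
  exact ih _ (by omega) hIb' (by simp)
    (hc.trans (excess_le_excess_append_cons_cons pre suf (by omega))) rfl

theorem PI_mem_span_admissibleMonomials {c : ℤ} {I : List ℤ} (hne : I ≠ []) (hc : c ≤ excess I) :
    PI I ∈ Submodule.span (ZMod 2) (admissibleMonomials c) :=
  let ⟨_, hb, hIb⟩ := exists_admissible_forall₂_le I
  PI_mem_span_admissibleMonomials_of_forall₂_le hb hIb hne hc

theorem PI_cons_mem_span_admissibleMonomials {c : ℤ} (a : ℤ) {K : List ℤ} (hK : K ≠ [])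
    (hadm : Admissible K) (hc : c ≤ excess K) :
    PI (a :: K) ∈ Submodule.span (ZMod 2) (admissibleMonomials c) := by
  obtain ⟨k, K', rfl⟩ := exists_cons_of_ne_nil hK
  simp only [excess] at hc
  by_cases hak : 2 * k ≤ a
  · refine Submodule.subset_span ⟨a :: k :: K', cons_ne_nil _ _,
      isChain_cons_cons.mpr ⟨hak, hadm⟩, ?_, rfl⟩
    simp only [excess, sum_cons]
    linarith
  · refine PI_append_cons_cons_mem_of_adem _ [] K' (by omega : a < 2 * k) fun i hi => ?_
    obtain ⟨hi₁, -⟩ := bounds_of_ademCoef_ne_zero hi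
    refine PI_mem_span_admissibleMonomials (cons_ne_nil _ _) ?_
    simp only [nil_append, excess, sum_cons]
    linarith

theorem P_mul_mem_span_admissibleMonomials {c : ℤ} (a : ℤ) {x : B}
    (hx : x ∈ Submodule.span (ZMod 2) (admissibleMonomials c)) :
    P a * x ∈ Submodule.span (ZMod 2) (admissibleMonomials c) := by
  have hle : Submodule.span (ZMod 2) (admissibleMonomials c) ≤
      (Submodule.span (ZMod 2) (admissibleMonomials c)).comap (LinearMap.mulLeft (ZMod 2) (P a)) :=
    Submodule.span_le.mpr fun _ ⟨K, hK, hadm, hc, hy⟩ => by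
      simpa only [hy, PI_cons, SetLike.mem_coe, Submodule.mem_comap, LinearMap.mulLeft_apply]
        using PI_cons_mem_span_admissibleMonomials a hK hadm hc
  exact hle hx

end

theorem statement13_general (I J : List ℤ) (hJ : Admissible J) (hJne : J ≠ []) :
    PI I * PI J ∈ Submodule.span (ZMod 2)
      {x : B | ∃ K : List ℤ, K ≠ [] ∧ Admissible K ∧ excess J ≤ excess K ∧ x = PI K} := by
  induction I with
  | nil =>
    rw [PI_nil, one_mul]
    exact Submodule.subset_span ⟨J, hJne, hJ, le_rfl, rfl⟩
  | cons a t ih =>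
    rw [PI_cons, mul_assoc]
    exact P_mul_mem_span_admissibleMonomials a ih

/-- **Statement 13.** If `I` and `J` are admissible multi-indices with `J` nonempty, then the
product `P^I · P^J` in `B` lies in the `F₂`-linear span of the elements `P^K`, where `K`
ranges over nonempty admissible multi-indices with `e(K) ≥ e(J)`. -/
theorem statement13 (I J : List ℤ) (hI : Admissible I) (hJ : Admissible J) (hJne : J ≠ []) :
    PI I * PI J ∈ Submodule.span (ZMod 2)
      {x : B | ∃ K : List ℤ, K ≠ [] ∧ Admissible K ∧ excess J ≤ excess K ∧ x = PI K} :=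
  statement13_general I J hJ hJne
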